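/- arXiv:2507.10425 — 2 statements merged into one kernel-verified Lean document; each statement's English description precedes it below -/
import Mathlib

section
/- For probability measures P and Q on ℝ with CDFs F_P and F_Q, the 1-Wasserstein distance satisfies W₁(P,Q) = ∫_ℝ |F_P(t) − F_Q(t)| dt, provided both measures have finite first moments. -/
open MeasureTheory Set

/-- CDF of a measure on ℝ. -/
noncomputable def F (μ : Measure ℝ) (t : ℝ) : ℝ := (μ (Iic t)).toReal

/-- 1-Wasserstein distance: infimum over couplings of `P` and `Q` of the expected distance. -/
noncomputable def W1 (P Q : Measure ℝ) : ℝ :=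
  ⨅ π : {π : Measure (ℝ × ℝ) // π.map Prod.fst = P ∧ π.map Prod.snd = Q},
    ∫ p, |p.1 - p.2| ∂(π : Measure (ℝ × ℝ))

/-!
For a coupling `π`, Tonelli gives `∫ |x - y| dπ = ∫ π {t lies between x and y} dt`. The set of
`(x, y)` with `t` between them is the symmetric difference of `{x ≤ t}` and `{y ≤ t}`, whose
`π`-measure is at least `|F_P t - F_Q t|`. Under the quantile coupling
`u ↦ (F_P⁻¹ u, F_Q⁻¹ u)`, `u` uniform on `(0, 1)`, these two events are nested, so the bound is
attained.
-/

open Filter Topology ProbabilityTheory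
open scoped ENNReal symmDiff

def crossingSet (t : ℝ) : Set (ℝ × ℝ) := {p | p.1 ≤ t} ∆ {p | p.2 ≤ t}

lemma mem_crossingSet_iff {t : ℝ} {p : ℝ × ℝ} :
    p ∈ crossingSet t ↔ t ∈ Ico (min p.1 p.2) (max p.1 p.2) := by
  simp only [crossingSet, mem_symmDiff, mem_ofPred_eq, mem_Ico, min_le_iff, lt_max_iff, not_le]
  grind

lemma measurableSet_crossingSet (t : ℝ) : MeasurableSet (crossingSet t) :=
  (measurableSet_le measurable_fst measurable_const).symmDiff
    (measurableSet_le measurable_snd measurable_const)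

lemma lintegral_ofReal_abs_sub_eq_lintegral_crossingSet (π : Measure (ℝ × ℝ)) [SFinite π] :
    ∫⁻ p, ENNReal.ofReal |p.1 - p.2| ∂π = ∫⁻ t, π (crossingSet t) := by
  set U : Set ((ℝ × ℝ) × ℝ) := {q | q.1 ∈ crossingSet q.2}
  have hU : MeasurableSet U :=
    (measurableSet_le measurable_fst.fst measurable_snd).symmDiff
      (measurableSet_le measurable_fst.snd measurable_snd)
  have hslice (p : ℝ × ℝ) : Prod.mk p ⁻¹' U = Ico (min p.1 p.2) (max p.1 p.2) :=
    ext fun _ => mem_crossingSet_iff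
  calc ∫⁻ p, ENNReal.ofReal |p.1 - p.2| ∂π
      = ∫⁻ p, volume (Prod.mk p ⁻¹' U) ∂π := by
        simp_rw [hslice, Real.volume_Ico, max_sub_min_eq_abs, abs_sub_comm]
    _ = ∫⁻ t, π (crossingSet t) := by
        rw [← Measure.prod_apply hU, Measure.prod_apply_symm hU]
        rfl

lemma abs_measureReal_sub_le_measureReal_symmDiff {α : Type*} [MeasurableSpace α]
    (μ : Measure α) [IsFiniteMeasure μ] (s t : Set α) :
    |μ.real s - μ.real t| ≤ μ.real (s ∆ t) := by
  have hle (s t : Set α) : μ.real s ≤ μ.real t + μ.real (s ∆ t) :=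
    (measureReal_mono fun x hx => by by_cases x ∈ t <;> simp_all [mem_symmDiff]).trans
      (measureReal_union_le t (s ∆ t))
  have hle' := hle t s
  rw [symmDiff_comm] at hle'
  exact abs_sub_le_iff.2 ⟨by linarith [hle s t], by linarith⟩

lemma measureReal_symmDiff_of_ae_le {α : Type*} [MeasurableSpace α]
    {μ : Measure α} [IsFiniteMeasure μ] {s t : Set α} (hs : MeasurableSet s)
    (ht : MeasurableSet t) (hst : s ≤ᵐ[μ] t) :
    μ.real (s ∆ t) = μ.real t - μ.real s := by
  have hnull : μ.real (s \ t) = 0 := by simp [Measure.real, ae_le_set.1 hst]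
  have hs' := measureReal_inter_add_sdiff (μ := μ) (s := s) ht
  have ht' := measureReal_inter_add_sdiff (μ := μ) (s := t) hs
  rw [hnull, inter_comm] at hs'
  rw [measureReal_symmDiff_eq hs ht, hnull]
  linarith

lemma F_map {α : Type*} [MeasurableSpace α] (μ : Measure α) {f : α → ℝ} (hf : Measurable f)
    (t : ℝ) : F (μ.map f) t = μ.real (f ⁻¹' Iic t) :=
  map_measureReal_apply hf measurableSet_Iic

lemma F_eq_cdf (μ : Measure ℝ) [IsProbabilityMeasure μ] : F μ = cdf μ :=
  funext fun t => (cdf_eq_real μ t).symm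

lemma monotone_F (μ : Measure ℝ) [IsFiniteMeasure μ] : Monotone (F μ) := fun _ _ hst =>
  measureReal_mono (Iic_subset_Iic.2 hst)

lemma measurable_abs_F_sub (μ ν : Measure ℝ) [IsFiniteMeasure μ] [IsFiniteMeasure ν] :
    Measurable fun t => |F μ t - F ν t| :=
  ((monotone_F μ).measurable.sub (monotone_F ν).measurable).abs

lemma abs_F_sub_le_measureReal_crossingSet (π : Measure (ℝ × ℝ)) [IsFiniteMeasure π] (t : ℝ) :
    |F (π.map Prod.fst) t - F (π.map Prod.snd) t| ≤ π.real (crossingSet t) := by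
  rw [F_map π measurable_fst, F_map π measurable_snd]
  exact abs_measureReal_sub_le_measureReal_symmDiff π _ _

lemma integral_abs_F_sub_le (π : Measure (ℝ × ℝ)) [IsFiniteMeasure π]
    (h₁ : Integrable id (π.map Prod.fst)) (h₂ : Integrable id (π.map Prod.snd)) :
    ∫ t, |F (π.map Prod.fst) t - F (π.map Prod.snd) t| ≤ ∫ p, |p.1 - p.2| ∂π := by
  have hint : Integrable (fun p : ℝ × ℝ => |p.1 - p.2|) π :=
    ((h₁.comp_measurable measurable_fst).sub (h₂.comp_measurable measurable_snd)).abs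
  rw [integral_eq_lintegral_of_nonneg_ae (ae_of_all _ fun _ => abs_nonneg _)
      (measurable_abs_F_sub _ _).aestronglyMeasurable,
    integral_eq_lintegral_of_nonneg_ae (ae_of_all _ fun _ => abs_nonneg _) hint.1,
    lintegral_ofReal_abs_sub_eq_lintegral_crossingSet]
  refine ENNReal.toReal_mono ?_ (lintegral_mono fun t => ?_)
  · rw [← lintegral_ofReal_abs_sub_eq_lintegral_crossingSet]
    exact hint.lintegral_lt_top.ne
  · rw [← ofReal_measureReal]
    exact ENNReal.ofReal_le_ofReal (abs_F_sub_le_measureReal_crossingSet π t)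

/-- Only meaningful for `u ∈ (0, 1)`; elsewhere the `sInf` is a junk value. -/
noncomputable def quantile (μ : Measure ℝ) (u : ℝ) : ℝ := sInf {x | u ≤ cdf μ x}

section Quantile

variable {μ : Measure ℝ}

lemma quantile_le_iff {u : ℝ} (hu : u ∈ Ioo 0 1) (t : ℝ) : quantile μ u ≤ t ↔ u ≤ cdf μ t := by
  have hne : {x | u ≤ cdf μ x}.Nonempty :=
    ((tendsto_cdf_atTop μ).eventually_const_le hu.2).exists
  have hbdd : BddBelow {x | u ≤ cdf μ x} := by
    obtain ⟨x₀, hx₀⟩ := ((tendsto_cdf_atBot μ).eventually_lt_const hu.1).exists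
    exact ⟨x₀, fun x hx => le_of_not_ge fun hxx₀ => (hx.trans (monotone_cdf μ hxx₀)).not_gt hx₀⟩
  refine ⟨fun h => ?_, fun h => csInf_le hbdd h⟩
  have hright : ∀ s ∈ Ioi t, u ≤ cdf μ s := fun s hs => by
    obtain ⟨x, hx, hxs⟩ := (csInf_lt_iff hbdd hne).1 (h.trans_lt hs)
    exact hx.trans (monotone_cdf μ hxs.le)
  exact ge_of_tendsto (((cdf μ).right_continuous t).mono Ioi_subset_Ici_self).tendsto
    (eventually_nhdsWithin_of_forall hright)

lemma monotoneOn_quantile : MonotoneOn (quantile μ) (Ioo 0 1) := fun _ hu _ hv huv =>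
  (quantile_le_iff hu _).2 <| huv.trans <| (quantile_le_iff hv _).1 le_rfl

lemma aemeasurable_quantile : AEMeasurable (quantile μ) (volume.restrict (Ioo 0 1)) :=
  aemeasurable_restrict_of_monotoneOn measurableSet_Ioo monotoneOn_quantile

lemma volume_restrict_Ioo_Iic {c : ℝ} (hc : c ≤ 1) :
    volume.restrict (Ioo (0 : ℝ) 1) (Iic c) = ENNReal.ofReal c := by
  rw [Measure.restrict_congr_set Ioo_ae_eq_Icc, Measure.restrict_apply measurableSet_Iic,
    show Iic c ∩ Icc 0 1 = Icc 0 c by ext; simp only [mem_inter_iff, mem_Iic, mem_Icc]; grind,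
    Real.volume_Icc, sub_zero]

lemma map_quantile [IsProbabilityMeasure μ] :
    (volume.restrict (Ioo 0 1)).map (quantile μ) = μ := by
  refine Measure.ext_of_Iic _ _ fun t => ?_
  have hpre : quantile μ ⁻¹' Iic t ∩ Ioo 0 1 = Iic (cdf μ t) ∩ Ioo 0 1 :=
    ext fun u => and_congr_left fun hu => quantile_le_iff hu t
  rw [Measure.map_apply_of_aemeasurable aemeasurable_quantile measurableSet_Iic,
    Measure.restrict_apply' measurableSet_Ioo, hpre, ← Measure.restrict_apply' measurableSet_Ioo,
    volume_restrict_Ioo_Iic (cdf_le_one μ t), ofReal_cdf]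

lemma ae_quantile_le_imp {ν : Measure ℝ} {t : ℝ} (h : cdf μ t ≤ cdf ν t) :
    ∀ᵐ u ∂volume.restrict (Ioo 0 1), quantile μ u ≤ t → quantile ν u ≤ t :=
  ae_restrict_of_forall_mem measurableSet_Ioo fun _ hu hμ =>
    (quantile_le_iff hu t).2 (((quantile_le_iff hu t).1 hμ).trans h)

end Quantile

/-- The comonotone coupling of `P` and `Q`. -/
noncomputable def quantileCoupling (P Q : Measure ℝ) : Measure (ℝ × ℝ) :=
  (volume.restrict (Ioo 0 1)).map fun u => (quantile P u, quantile Q u)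

instance (P Q : Measure ℝ) : IsFiniteMeasure (quantileCoupling P Q) := by
  unfold quantileCoupling; infer_instance

lemma aemeasurable_quantile_prod (P Q : Measure ℝ) :
    AEMeasurable (fun u => (quantile P u, quantile Q u)) (volume.restrict (Ioo 0 1)) :=
  aemeasurable_quantile.prodMk aemeasurable_quantile

lemma map_fst_quantileCoupling (P Q : Measure ℝ) [IsProbabilityMeasure P] :
    (quantileCoupling P Q).map Prod.fst = P := by
  rw [quantileCoupling, AEMeasurable.map_map_of_aemeasurable measurable_fst.aemeasurable
    (aemeasurable_quantile_prod P Q)]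
  exact map_quantile

lemma map_snd_quantileCoupling (P Q : Measure ℝ) [IsProbabilityMeasure Q] :
    (quantileCoupling P Q).map Prod.snd = Q := by
  rw [quantileCoupling, AEMeasurable.map_map_of_aemeasurable measurable_snd.aemeasurable
    (aemeasurable_quantile_prod P Q)]
  exact map_quantile

lemma measureReal_quantileCoupling_crossingSet (P Q : Measure ℝ) [IsProbabilityMeasure P]
    [IsProbabilityMeasure Q] (t : ℝ) :
    (quantileCoupling P Q).real (crossingSet t) = |F P t - F Q t| := by
  set π₀ := quantileCoupling P Q
  have hF₁ : F P t = π₀.real {p | p.1 ≤ t} :=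
    map_fst_quantileCoupling P Q ▸ F_map π₀ measurable_fst t
  have hF₂ : F Q t = π₀.real {p | p.2 ≤ t} :=
    map_snd_quantileCoupling P Q ▸ F_map π₀ measurable_snd t
  have hA : MeasurableSet {p : ℝ × ℝ | p.1 ≤ t} := measurableSet_le measurable_fst measurable_const
  have hB : MeasurableSet {p : ℝ × ℝ | p.2 ≤ t} := measurableSet_le measurable_snd measurable_const
  rcases le_total (cdf P t) (cdf Q t) with h | h
  · have hAB : {p : ℝ × ℝ | p.1 ≤ t} ≤ᵐ[π₀] {p | p.2 ≤ t} :=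
      (ae_map_iff (aemeasurable_quantile_prod P Q) (hA.imp hB)).2 (ae_quantile_le_imp h)
    rw [crossingSet, measureReal_symmDiff_of_ae_le hA hB hAB, ← hF₁, ← hF₂, abs_sub_comm,
      abs_of_nonneg]
    rwa [sub_nonneg, F_eq_cdf, F_eq_cdf]
  · have hBA : {p : ℝ × ℝ | p.2 ≤ t} ≤ᵐ[π₀] {p | p.1 ≤ t} :=
      (ae_map_iff (aemeasurable_quantile_prod P Q) (hB.imp hA)).2 (ae_quantile_le_imp h)
    rw [crossingSet, symmDiff_comm, measureReal_symmDiff_of_ae_le hB hA hBA, ← hF₁, ← hF₂,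
      abs_of_nonneg]
    rwa [sub_nonneg, F_eq_cdf, F_eq_cdf]

lemma integral_abs_sub_quantileCoupling (P Q : Measure ℝ) [IsProbabilityMeasure P]
    [IsProbabilityMeasure Q] :
    ∫ p, |p.1 - p.2| ∂quantileCoupling P Q = ∫ t, |F P t - F Q t| := by
  rw [integral_eq_lintegral_of_nonneg_ae (ae_of_all _ fun _ => abs_nonneg _)
      (by fun_prop : Measurable fun p : ℝ × ℝ => |p.1 - p.2|).aestronglyMeasurable,
    integral_eq_lintegral_of_nonneg_ae (ae_of_all _ fun _ => abs_nonneg _)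
      (measurable_abs_F_sub P Q).aestronglyMeasurable,
    lintegral_ofReal_abs_sub_eq_lintegral_crossingSet]
  congr 1
  refine lintegral_congr fun t => ?_
  rw [← measureReal_quantileCoupling_crossingSet P Q t, ofReal_measureReal]

theorem stmt1 (P Q : Measure ℝ) [IsProbabilityMeasure P] [IsProbabilityMeasure Q]
    (hP : Integrable id P) (hQ : Integrable id Q) :
    W1 P Q = ∫ t, |F P t - F Q t| := by
  have hlower (π : {π : Measure (ℝ × ℝ) // π.map Prod.fst = P ∧ π.map Prod.snd = Q}) :
      ∫ t, |F P t - F Q t| ≤ ∫ p, |p.1 - p.2| ∂(π : Measure (ℝ × ℝ)) := by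
    obtain ⟨π, rfl, rfl⟩ := π
    have : IsFiniteMeasure π := Measure.isFiniteMeasure_of_map measurable_fst.aemeasurable
    exact integral_abs_F_sub_le π hP hQ
  let π₀ : {π : Measure (ℝ × ℝ) // π.map Prod.fst = P ∧ π.map Prod.snd = Q} :=
    ⟨quantileCoupling P Q, map_fst_quantileCoupling P Q, map_snd_quantileCoupling P Q⟩
  have : Nonempty {π : Measure (ℝ × ℝ) // π.map Prod.fst = P ∧ π.map Prod.snd = Q} := ⟨π₀⟩
  refine IsGLB.ciInf_eq (IsLeast.isGLB ⟨⟨π₀, integral_abs_sub_quantileCoupling P Q⟩, ?_⟩)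
  rintro _ ⟨π, rfl⟩
  exact hlower π
end

section
/- (Theorem 2, unlabeled W₁ bound) Let P, Q, Q↑, Q↓ be probability measures on ℝ with finite first moments, with Q↑ ≽ Q ≽ Q↓, and suppose P has bounded density p. Then the total coverage gap satisfies Δ_{P,Q} ≤ (1/2)(sup_t p(t))·(W₁(P, Q↑) + W₁(P, Q↓) + E_{Q↑}[X] − E_{Q↓}[X]). -/
/-
For a uniform level `α ∈ (0,1)` and an i.i.d. sample `s ∼ Pⁿ`, the empirical quantile `Q_α(s)` has
law exactly `P`: for fixed `s`, `α ↦ Q_α(s)` pushes the uniform law forward to the empirical measure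
of `s`, whose average over `s` is `P`. Since `F_{Q↑} ≤ F_Q ≤ F_{Q↓}`, the integrand of `Δ` is
dominated by `h = (F_P - F_{Q↑})⁺ + (F_P - F_{Q↓})⁻`, so `Δ ≤ E_P[h] ≤ (sup p) ∫ h dt`. Finally
`∫ g⁺ = (∫ |g| + ∫ g) / 2`, `∫ |F_A - F_B| ≤ W₁(A, B)` (integrate `|1{x ≤ t} - 1{y ≤ t}|` against
any coupling) and `∫ (F_A - F_B) = E_B[X] - E_A[X]`.
-/

open MeasureTheory Set
open scoped Classical

/-- Empirical `(1−α)`-quantile of a sample `s` of size `n`. -/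
noncomputable def empQuantile {n : ℕ} (s : Fin n → ℝ) (α : ℝ) : ℝ :=
  sInf {t : ℝ | 1 - α ≤ ((Finset.univ.filter fun i => s i ≤ t).card : ℝ) / (n : ℝ)}

/-- Total coverage gap `Δ_{P,Q}` for a calibration sample of size `n`. -/
noncomputable def totalCovGap (P Q : Measure ℝ) (n : ℕ) : ℝ :=
  ∫ α in (0:ℝ)..1,
    |∫ s, (F P (empQuantile s α) - F Q (empQuantile s α))
        ∂(Measure.pi fun _ : Fin n => P)|

open scoped ENNReal

theorem measurable_F (μ : Measure ℝ) [IsFiniteMeasure μ] : Measurable (F μ) :=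
  Monotone.measurable fun _ _ hab =>
    ENNReal.toReal_mono (measure_ne_top μ _) (measure_mono (Iic_subset_Iic.2 hab))

theorem csInf_setOf_le_le_iff {α β : Type*} [ConditionallyCompleteLinearOrder α]
    [TopologicalSpace α] [OrderTopology α] [LinearOrder β] {f : α → β} (hf : Monotone f)
    (hf' : UpperSemicontinuous f) {a : β} (hne : ∃ t, a ≤ f t) (hbdd : BddBelow {t | a ≤ f t})
    (c : α) : sInf {t | a ≤ f t} ≤ c ↔ a ≤ f c :=
  ⟨fun h => ((hf'.isClosed_preimage a).csInf_mem hne hbdd).trans (hf h),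
    fun h => csInf_le hbdd h⟩

theorem volume_Ici_inter_Ioo_zero_one {a : ℝ} (ha₀ : 0 ≤ a) :
    volume (Ici a ∩ Ioo 0 1) = ENNReal.ofReal (1 - a) := by
  refine le_antisymm ((measure_mono ?_).trans_eq Real.volume_Icc)
    (Real.volume_Ioo.symm.le.trans (measure_mono ?_))
  · exact fun x hx => ⟨hx.1, hx.2.2.le⟩
  · exact fun x hx => ⟨hx.1.le, ha₀.trans_lt hx.1, hx.2⟩

section Empirical

variable {n : ℕ}

noncomputable def countLE (s : Fin n → ℝ) (t : ℝ) : ℕ := (Finset.univ.filter fun i => s i ≤ t).card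

noncomputable def empCDF (s : Fin n → ℝ) (t : ℝ) : ℝ := countLE s t / n

theorem empQuantile_eq_sInf (s : Fin n → ℝ) (α : ℝ) :
    empQuantile s α = sInf {t | 1 - α ≤ empCDF s t} := rfl

theorem empCDF_eq_sum (s : Fin n → ℝ) (t : ℝ) :
    empCDF s t = ∑ i, (Ici (s i)).indicator (fun _ => (n : ℝ)⁻¹) t := by
  rw [empCDF, countLE, Finset.card_filter, Nat.cast_sum, Finset.sum_div]
  refine Finset.sum_congr rfl fun i _ => ?_
  by_cases h : s i ≤ t <;> simp [h]

theorem monotone_empCDF (s : Fin n → ℝ) : Monotone (empCDF s) := fun a b hab => by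
  unfold empCDF countLE
  gcongr

theorem upperSemicontinuous_empCDF (s : Fin n → ℝ) : UpperSemicontinuous (empCDF s) := by
  simp_rw [funext (empCDF_eq_sum s)]
  exact upperSemicontinuous_sum fun i _ =>
    isClosed_Ici.upperSemicontinuous_indicator (by positivity)

theorem empCDF_le_one (s : Fin n → ℝ) (t : ℝ) : empCDF s t ≤ 1 := by
  unfold empCDF countLE
  refine div_le_one_of_le₀ ?_ n.cast_nonneg
  exact_mod_cast (Finset.card_filter_le _ _).trans (Finset.card_univ.trans (Fintype.card_fin n)).le

theorem measurable_empCDF_left (t : ℝ) : Measurable fun s : Fin n → ℝ => empCDF s t := by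
  simp_rw [empCDF_eq_sum, indicator_apply, mem_Ici]
  exact Finset.measurable_sum _ fun i _ =>
    Measurable.ite (measurableSet_le (measurable_pi_apply i) measurable_const) measurable_const
      measurable_const

theorem empCDF_of_forall_lt {s : Fin n → ℝ} {t : ℝ} (h : ∀ i, t < s i) : empCDF s t = 0 := by
  simp [empCDF, countLE, Finset.filter_false_of_mem fun i _ => not_le.2 (h i)]

theorem empCDF_of_forall_le (hn : 0 < n) {s : Fin n → ℝ} {t : ℝ} (h : ∀ i, s i ≤ t) :
    empCDF s t = 1 := by
  simp [empCDF, countLE, Finset.filter_true_of_mem fun i _ => h i, hn.ne']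

theorem empQuantile_le_iff (hn : 0 < n) {α : ℝ} (hα : α ∈ Ioo (0 : ℝ) 1) (s : Fin n → ℝ)
    (c : ℝ) : empQuantile s α ≤ c ↔ 1 - α ≤ empCDF s c := by
  obtain ⟨m, hm⟩ := (finite_range s).bddBelow
  obtain ⟨M, hM⟩ := (finite_range s).bddAbove
  rw [empQuantile_eq_sInf]
  refine csInf_setOf_le_le_iff (monotone_empCDF s) (upperSemicontinuous_empCDF s)
    ⟨M, ?_⟩ ⟨m, fun t ht => ?_⟩ c
  · rw [empCDF_of_forall_le hn fun i => hM (mem_range_self i)]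
    linarith [hα.1]
  · by_contra! htm
    have := empCDF_of_forall_lt fun i => htm.trans_le (hm (mem_range_self i))
    linarith [hα.2, ht.out]

noncomputable def empMeasure (s : Fin n → ℝ) : Measure ℝ := (n : ℝ≥0∞)⁻¹ • ∑ i, Measure.dirac (s i)

theorem empMeasure_Iic (hn : 0 < n) (s : Fin n → ℝ) (t : ℝ) :
    empMeasure s (Iic t) = ENNReal.ofReal (empCDF s t) := by
  rw [empCDF, countLE, ENNReal.ofReal_div_of_pos (by exact_mod_cast hn)]
  simp [empMeasure, Measure.dirac_apply' _ measurableSet_Iic, indicator_apply,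
    ENNReal.div_eq_inv_mul]

theorem lintegral_empMeasure_pi (hn : 0 < n) (P : Measure ℝ) [IsProbabilityMeasure P] {B : Set ℝ}
    (hB : MeasurableSet B) : ∫⁻ s, empMeasure s B ∂(Measure.pi fun _ : Fin n => P) = P B := by
  have hcoord (i : Fin n) : ∫⁻ s, B.indicator 1 (s i) ∂(Measure.pi fun _ => P) = P B := by
    rw [(measurePreserving_eval _ i).lintegral_comp (measurable_one.indicator hB),
      lintegral_indicator_one hB]
  simp only [empMeasure, Measure.smul_apply, Measure.coe_finsetSum, Finset.sum_apply, smul_eq_mul,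
    Measure.dirac_apply' _ hB]
  rw [lintegral_const_mul' _ _ (by simp [hn.ne']), lintegral_finsetSum]
  · simp [hcoord, ← mul_assoc, ENNReal.inv_mul_cancel, hn.ne']
  · exact fun i _ => (measurable_one.indicator hB).comp (measurable_pi_apply i)

/-- `empQuantile` as a function of (level, sample), cut off to `0` outside `0 < α < 1`, where
`empQuantile` takes junk values (for `α ≥ 1` its defining set is all of `ℝ`). -/
noncomputable def empQuantileIoo (q : ℝ × (Fin n → ℝ)) : ℝ :=
  if q.1 ∈ Ioo 0 1 then empQuantile q.2 q.1 else 0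

theorem empQuantileIoo_le_iff (hn : 0 < n) (q : ℝ × (Fin n → ℝ)) (c : ℝ) :
    empQuantileIoo q ≤ c ↔
      (q.1 ∈ Ioo 0 1 ∧ 1 - q.1 ≤ empCDF q.2 c) ∨ (q.1 ∉ Ioo 0 1 ∧ 0 ≤ c) := by
  unfold empQuantileIoo
  split_ifs with hq
  · simp [hq, empQuantile_le_iff hn hq]
  · simp [hq]

theorem measurable_empQuantileIoo (hn : 0 < n) : Measurable (empQuantileIoo (n := n)) := by
  refine measurable_of_Iic fun c => ?_
  have hIoo : MeasurableSet {q : ℝ × (Fin n → ℝ) | q.1 ∈ Ioo 0 1} :=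
    measurable_fst measurableSet_Ioo
  simp_rw [preimage, mem_Iic, empQuantileIoo_le_iff hn, ofPred_or, ofPred_and]
  exact (hIoo.inter (measurableSet_le (measurable_const.sub measurable_fst)
    ((measurable_empCDF_left c).comp measurable_snd))).union
    (hIoo.compl.inter (MeasurableSet.const _))

theorem map_empQuantileIoo_volume (hn : 0 < n) (s : Fin n → ℝ) :
    (volume.restrict (Ioo 0 1)).map (fun α => empQuantileIoo (α, s)) = empMeasure s := by
  have hT : Measurable fun α => empQuantileIoo (α, s) :=
    (measurable_empQuantileIoo hn).comp measurable_prodMk_right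
  refine Measure.ext_of_Iic _ _ fun c => ?_
  have hslice : (fun α => empQuantileIoo (α, s)) ⁻¹' Iic c ∩ Ioo 0 1
      = Ici (1 - empCDF s c) ∩ Ioo 0 1 := by
    ext α
    simp only [mem_inter_iff]
    refine and_congr_left fun hα => ?_
    simp [empQuantileIoo_le_iff hn, hα, add_comm]
  rw [Measure.map_apply hT measurableSet_Iic, Measure.restrict_apply (hT measurableSet_Iic),
    hslice, volume_Ici_inter_Ioo_zero_one (by linarith [empCDF_le_one s c]),
    sub_sub_cancel, empMeasure_Iic hn]

theorem map_empQuantileIoo_prod (hn : 0 < n) (P : Measure ℝ) [IsProbabilityMeasure P] :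
    ((volume.restrict (Ioo 0 1)).prod (Measure.pi fun _ : Fin n => P)).map empQuantileIoo = P := by
  have hT := measurable_empQuantileIoo (n := n) hn
  ext B hB
  rw [Measure.map_apply hT hB, Measure.prod_apply_symm (hT hB), ← lintegral_empMeasure_pi hn P hB]
  refine lintegral_congr fun s => ?_
  have hTs : Measurable fun α => empQuantileIoo (α, s) := hT.comp measurable_prodMk_right
  rw [← map_empQuantileIoo_volume hn s, Measure.map_apply hTs hB]
  rfl

theorem integrable_comp_empQuantileIoo (hn : 0 < n) (P : Measure ℝ)
    [IsProbabilityMeasure P] {g : ℝ → ℝ} (hg : Integrable g P) :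
    Integrable (fun q => g (empQuantileIoo q))
      ((volume.restrict (Ioo 0 1)).prod (Measure.pi fun _ : Fin n => P)) := by
  rw [← map_empQuantileIoo_prod hn P] at hg
  exact (integrable_map_measure hg.aestronglyMeasurable
    (measurable_empQuantileIoo hn).aemeasurable).1 hg

theorem integral_integral_empQuantileIoo (hn : 0 < n) (P : Measure ℝ) [IsProbabilityMeasure P]
    {g : ℝ → ℝ} (hg : Integrable g P) :
    ∫ α in Ioo 0 1, ∫ s, g (empQuantileIoo (α, s)) ∂(Measure.pi fun _ : Fin n => P)
      = ∫ t, g t ∂P := by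
  have hlaw := map_empQuantileIoo_prod hn P
  rw [← integral_prod _ (integrable_comp_empQuantileIoo hn P hg),
    ← integral_map (measurable_empQuantileIoo hn).aemeasurable
      (by rw [hlaw]; exact hg.aestronglyMeasurable), hlaw]

theorem totalCovGap_le_integral (hn : 0 < n) (P Q : Measure ℝ) [IsProbabilityMeasure P]
    {h : ℝ → ℝ} (hh : Integrable h P) (hdom : ∀ t, |F P t - F Q t| ≤ h t) :
    totalCovGap P Q n ≤ ∫ t, h t ∂P := by
  have hint := integrable_comp_empQuantileIoo hn P hh
  calc totalCovGap P Q n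
      = ∫ α in Ioo 0 1, |∫ s, (F P (empQuantileIoo (α, s)) - F Q (empQuantileIoo (α, s)))
          ∂(Measure.pi fun _ : Fin n => P)| := by
        rw [totalCovGap, intervalIntegral.integral_of_le zero_le_one, integral_Ioc_eq_integral_Ioo]
        refine setIntegral_congr_fun measurableSet_Ioo fun α hα => ?_
        simp only [empQuantileIoo, hα, if_true]
    _ ≤ ∫ α in Ioo 0 1, ∫ s, h (empQuantileIoo (α, s)) ∂(Measure.pi fun _ : Fin n => P) := by
        refine integral_mono_of_nonneg (ae_of_all _ fun _ => abs_nonneg _)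
          hint.integral_prod_left ?_
        filter_upwards [hint.prod_right_ae] with α hα
        exact norm_integral_le_of_norm_le hα
          (ae_of_all _ fun s => (Real.norm_eq_abs _).trans_le (hdom _))
    _ = ∫ t, h t ∂P := integral_integral_empQuantileIoo hn P hh

end Empirical

section Coupling

variable {A B : Measure ℝ}

theorem measurable_indicator_Iic_apply {α : Type*} [MeasurableSpace α] {f g : α → ℝ}
    (hf : Measurable f) (hg : Measurable g) :
    Measurable fun a => (Iic (f a)).indicator (1 : ℝ → ℝ) (g a) := by
  simp only [indicator_apply, mem_Iic, Pi.one_apply]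
  exact Measurable.ite (measurableSet_le hg hf) measurable_const measurable_const

theorem indicator_Iic_sub_indicator_Iic {x y : ℝ} (hxy : x ≤ y) (t : ℝ) :
    (Iic t).indicator (1 : ℝ → ℝ) x - (Iic t).indicator 1 y = (Ico x y).indicator 1 t := by
  by_cases hx : x ≤ t <;> by_cases hy : y ≤ t <;> simp [hx, hy, indicator_apply]
  linarith

theorem integral_indicator_Iic_sub (x y : ℝ) :
    ∫ t, ((Iic t).indicator (1 : ℝ → ℝ) x - (Iic t).indicator 1 y) = y - x := by
  wlog hxy : x ≤ y generalizing x y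
  · rw [← neg_sub, ← this y x (le_of_not_ge hxy), ← integral_neg]
    simp
  simp_rw [indicator_Iic_sub_indicator_Iic hxy, integral_indicator_one measurableSet_Ico,
    Real.volume_real_Ico, max_eq_left (sub_nonneg.2 hxy)]

theorem lintegral_enorm_indicator_Iic_sub (x y : ℝ) :
    ∫⁻ t, ‖(Iic t).indicator (1 : ℝ → ℝ) x - (Iic t).indicator 1 y‖ₑ = ‖x - y‖ₑ := by
  wlog hxy : x ≤ y generalizing x y
  · simpa [enorm_sub_rev] using this y x (le_of_not_ge hxy)
  simp_rw [indicator_Iic_sub_indicator_Iic hxy, enorm_indicator_eq_indicator_enorm, Pi.one_apply,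
    enorm_one]
  rw [lintegral_indicator_const measurableSet_Ico, one_mul, Real.volume_Ico,
    Real.enorm_eq_ofReal_abs, abs_sub_comm, abs_of_nonneg (sub_nonneg.2 hxy)]

theorem integral_indicator_Iic_comp {α : Type*} [MeasurableSpace α] {π : Measure α}
    {φ : α → ℝ} (hφ : Measurable φ) (t : ℝ) :
    ∫ q, (Iic t).indicator (1 : ℝ → ℝ) (φ q) ∂π = F (π.map φ) t := by
  rw [← integral_map hφ.aemeasurable
    ((measurable_one.indicator measurableSet_Iic).aestronglyMeasurable),
    integral_indicator_one measurableSet_Iic]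
  rfl

theorem integrable_indicator_Iic_comp {α : Type*} [MeasurableSpace α] {π : Measure α}
    [IsFiniteMeasure π] {φ : α → ℝ} (hφ : Measurable φ) (t : ℝ) :
    Integrable (fun q => (Iic t).indicator (1 : ℝ → ℝ) (φ q)) π :=
  (integrable_const 1).mono'
    (measurable_indicator_Iic_apply measurable_const hφ).aestronglyMeasurable
    (ae_of_all _ fun q => by simp [indicator_apply]; split_ifs <;> norm_num)

theorem F_sub_F_eq_integral {π : Measure (ℝ × ℝ)} [IsFiniteMeasure π] (h₁ : π.map Prod.fst = A)
    (h₂ : π.map Prod.snd = B) (t : ℝ) :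
    F A t - F B t = ∫ q, ((Iic t).indicator (1 : ℝ → ℝ) q.1 - (Iic t).indicator 1 q.2) ∂π := by
  rw [integral_sub (integrable_indicator_Iic_comp measurable_fst t)
    (integrable_indicator_Iic_comp measurable_snd t), integral_indicator_Iic_comp measurable_fst,
    integral_indicator_Iic_comp measurable_snd, h₁, h₂]

theorem lintegral_enorm_F_sub_le {π : Measure (ℝ × ℝ)} [IsFiniteMeasure π]
    (h₁ : π.map Prod.fst = A) (h₂ : π.map Prod.snd = B) :
    ∫⁻ t, ‖F A t - F B t‖ₑ ≤ ∫⁻ q, ‖q.1 - q.2‖ₑ ∂π := by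
  have hmeas : Measurable fun z : ℝ × (ℝ × ℝ) =>
      ‖(Iic z.1).indicator (1 : ℝ → ℝ) z.2.1 - (Iic z.1).indicator 1 z.2.2‖ₑ :=
    ((measurable_indicator_Iic_apply measurable_fst (by fun_prop)).sub
      (measurable_indicator_Iic_apply measurable_fst (by fun_prop))).enorm
  calc ∫⁻ t, ‖F A t - F B t‖ₑ
      ≤ ∫⁻ t, ∫⁻ q, ‖(Iic t).indicator (1 : ℝ → ℝ) q.1 - (Iic t).indicator 1 q.2‖ₑ ∂π :=
        lintegral_mono fun t => (F_sub_F_eq_integral h₁ h₂ t).symm ▸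
          enorm_integral_le_lintegral_enorm _
    _ = ∫⁻ q, (∫⁻ t, ‖(Iic t).indicator (1 : ℝ → ℝ) q.1 - (Iic t).indicator 1 q.2‖ₑ) ∂π :=
        lintegral_lintegral_swap hmeas.aemeasurable
    _ = ∫⁻ q, ‖q.1 - q.2‖ₑ ∂π := by simp_rw [lintegral_enorm_indicator_Iic_sub]

theorem integrable_fst_of_map {π : Measure (ℝ × ℝ)} (h₁ : π.map Prod.fst = A)
    (hA : Integrable id A) : Integrable Prod.fst π :=
  (integrable_map_measure aestronglyMeasurable_id measurable_fst.aemeasurable).1 (h₁ ▸ hA)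

theorem integrable_snd_of_map {π : Measure (ℝ × ℝ)} (h₂ : π.map Prod.snd = B)
    (hB : Integrable id B) : Integrable Prod.snd π :=
  (integrable_map_measure aestronglyMeasurable_id measurable_snd.aemeasurable).1 (h₂ ▸ hB)

theorem integrable_sub_of_map {π : Measure (ℝ × ℝ)} (h₁ : π.map Prod.fst = A)
    (h₂ : π.map Prod.snd = B) (hA : Integrable id A) (hB : Integrable id B) :
    Integrable (fun q : ℝ × ℝ => q.1 - q.2) π :=
  (integrable_fst_of_map h₁ hA).sub (integrable_snd_of_map h₂ hB)

variable [IsProbabilityMeasure A] [IsProbabilityMeasure B]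

theorem integrable_F_sub (hA : Integrable id A) (hB : Integrable id B) :
    Integrable fun t => F A t - F B t :=
  ⟨((measurable_F A).sub (measurable_F B)).aestronglyMeasurable,
    (lintegral_enorm_F_sub_le Measure.fst_prod Measure.snd_prod).trans_lt
      (integrable_sub_of_map Measure.fst_prod Measure.snd_prod hA hB).2⟩

theorem integral_abs_F_sub_le_W1 (hA : Integrable id A) (hB : Integrable id B) :
    ∫ t, |F A t - F B t| ≤ W1 A B := by
  have : Nonempty {π : Measure (ℝ × ℝ) // π.map Prod.fst = A ∧ π.map Prod.snd = B} :=
    ⟨⟨A.prod B, Measure.fst_prod, Measure.snd_prod⟩⟩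
  refine le_ciInf fun ⟨π, h₁, h₂⟩ => ?_
  have : IsFiniteMeasure π := by
    rw [← Measure.isFiniteMeasure_map_iff measurable_fst.aemeasurable, h₁]; infer_instance
  have hcost := integrable_sub_of_map h₁ h₂ hA hB
  simp only [← Real.norm_eq_abs]
  rw [integral_norm_eq_lintegral_enorm (integrable_F_sub hA hB).1,
    integral_norm_eq_lintegral_enorm hcost.1]
  exact ENNReal.toReal_mono hcost.2.ne (lintegral_enorm_F_sub_le h₁ h₂)

theorem integral_F_sub (hA : Integrable id A) (hB : Integrable id B) :
    ∫ t, (F A t - F B t) = ∫ x, x ∂B - ∫ x, x ∂A := by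
  set π := A.prod B
  have h₁ : π.map Prod.fst = A := Measure.fst_prod
  have h₂ : π.map Prod.snd = B := Measure.snd_prod
  set g : ℝ → ℝ × ℝ → ℝ := fun t q => (Iic t).indicator 1 q.1 - (Iic t).indicator 1 q.2
  have hg : Measurable (Function.uncurry g) :=
    (measurable_indicator_Iic_apply measurable_fst (by fun_prop)).sub
      (measurable_indicator_Iic_apply measurable_fst (by fun_prop))
  have hgint : Integrable (Function.uncurry g) (volume.prod π) := by
    refine ⟨hg.aestronglyMeasurable, ?_⟩
    simp only [HasFiniteIntegral, lintegral_prod_symm _ hg.enorm.aemeasurable]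
    simp only [Function.uncurry_apply_pair, g, lintegral_enorm_indicator_Iic_sub]
    exact (integrable_sub_of_map h₁ h₂ hA hB).2
  calc ∫ t, (F A t - F B t) = ∫ t, ∫ q, g t q ∂π := by simp only [g, F_sub_F_eq_integral h₁ h₂]
    _ = ∫ q, (∫ t, g t q) ∂π := integral_integral_swap hgint
    _ = ∫ q, (q.2 - q.1) ∂π := by simp_rw [g, integral_indicator_Iic_sub]
    _ = ∫ x, x ∂B - ∫ x, x ∂A := by
      rw [integral_sub (integrable_snd_of_map h₂ hB) (integrable_fst_of_map h₁ hA), ← h₁, ← h₂,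
        integral_map measurable_snd.aemeasurable measurable_id'.aestronglyMeasurable,
        integral_map measurable_fst.aemeasurable measurable_id'.aestronglyMeasurable]

end Coupling

theorem abs_sub_le_posPart_add_negPart {x u q d : ℝ} (hu : u ≤ q) (hd : q ≤ d) :
    |x - q| ≤ (x - u)⁺ + (x - d)⁻ :=
  abs_le.2 ⟨by linarith [neg_le_negPart (x - d), posPart_nonneg (x - u)],
    by linarith [le_posPart (x - u), negPart_nonneg (x - d)]⟩

theorem integral_posPart_eq {α : Type*} [MeasurableSpace α] {μ : Measure α} {f : α → ℝ}
    (hf : Integrable f μ) : ∫ x, (f x)⁺ ∂μ = (∫ x, |f x| ∂μ + ∫ x, f x ∂μ) / 2 := by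
  rw [← integral_add hf.abs hf, ← integral_div]
  refine integral_congr_ae (ae_of_all _ fun x => ?_)
  linarith [posPart_add_negPart (f x), posPart_sub_negPart (f x)]

theorem integral_negPart_eq {α : Type*} [MeasurableSpace α] {μ : Measure α} {f : α → ℝ}
    (hf : Integrable f μ) : ∫ x, (f x)⁻ ∂μ = (∫ x, |f x| ∂μ - ∫ x, f x ∂μ) / 2 := by
  rw [← integral_sub hf.abs hf, ← integral_div]
  refine integral_congr_ae (ae_of_all _ fun x => ?_)
  linarith [posPart_add_negPart (f x), posPart_sub_negPart (f x)]

theorem withDensity_ofReal_le_smul {α : Type*} [MeasurableSpace α] {μ : Measure α} {p : α → ℝ}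
    {c : ℝ} (hpc : ∀ x, p x ≤ c) :
    μ.withDensity (fun x => ENNReal.ofReal (p x)) ≤ ENNReal.ofReal c • μ :=
  (withDensity_mono (ae_of_all _ fun x => ENNReal.ofReal_le_ofReal (hpc x))).trans_eq
    (withDensity_const _)

theorem integral_le_mul_integral_of_le_smul {α : Type*} [MeasurableSpace α] {μ ν : Measure α}
    {c : ℝ} (hc : 0 ≤ c) (hμν : μ ≤ ENNReal.ofReal c • ν) {f : α → ℝ} (hf₀ : 0 ≤ f)
    (hf : Integrable f ν) : ∫ x, f x ∂μ ≤ c * ∫ x, f x ∂ν := by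
  calc ∫ x, f x ∂μ ≤ ∫ x, f x ∂(ENNReal.ofReal c • ν) :=
        integral_mono_measure hμν (ae_of_all _ hf₀) (hf.smul_measure ENNReal.ofReal_ne_top)
    _ = c * ∫ x, f x ∂ν := by rw [integral_smul_measure, ENNReal.toReal_ofReal hc, smul_eq_mul]

theorem stmt8_general (P Q Qup Qdown : Measure ℝ)
    [IsProbabilityMeasure P]
    [IsProbabilityMeasure Qup] [IsProbabilityMeasure Qdown]
    (n : ℕ) (hn : 0 < n)
    (p : ℝ → ℝ) (hp : ∀ t, 0 ≤ p t)
    (hPd : P = volume.withDensity fun t => ENNReal.ofReal (p t))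
    (hpbdd : BddAbove (Set.range p))
    (hP : Integrable id P)
    (hQup : Integrable id Qup) (hQdown : Integrable id Qdown)
    (hup : ∀ t : ℝ, F Qup t ≤ F Q t) (hdown : ∀ t : ℝ, F Q t ≤ F Qdown t) :
    totalCovGap P Q n ≤ (1/2) * (⨆ t, p t) *
      (W1 P Qup + W1 P Qdown + ((∫ x, x ∂Qup) - ∫ x, x ∂Qdown)) := by
  set c := ⨆ t, p t
  have hpc : ∀ t, p t ≤ c := le_ciSup hpbdd
  have hc : 0 ≤ c := (hp 0).trans (hpc 0)
  have hPc : P ≤ ENNReal.ofReal c • volume := hPd ▸ withDensity_ofReal_le_smul hpc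
  have hu := integrable_F_sub hP hQup
  have hd := integrable_F_sub hP hQdown
  have hu' : Integrable fun t => (F P t - F Qup t)⁺ := hu.pos_part
  have hd' : Integrable fun t => (F P t - F Qdown t)⁻ := hd.neg_part
  have hh := hu'.add hd'
  calc totalCovGap P Q n ≤ ∫ t, ((F P t - F Qup t)⁺ + (F P t - F Qdown t)⁻) ∂P :=
        totalCovGap_le_integral hn P Q
          ((hh.smul_measure ENNReal.ofReal_ne_top).mono_measure hPc)
          fun t => abs_sub_le_posPart_add_negPart (hup t) (hdown t)
    _ ≤ c * ∫ t, ((F P t - F Qup t)⁺ + (F P t - F Qdown t)⁻) :=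
        integral_le_mul_integral_of_le_smul hc hPc (fun t => by positivity) hh
    _ = (1/2) * c * ((∫ t, |F P t - F Qup t|) + (∫ t, |F P t - F Qdown t|) +
          ((∫ x, x ∂Qup) - ∫ x, x ∂Qdown)) := by
        rw [integral_add hu' hd', integral_posPart_eq hu, integral_negPart_eq hd,
          integral_F_sub hP hQup, integral_F_sub hP hQdown]
        ring
    _ ≤ _ := by
        gcongr 1 / 2 * c * (?_ + ?_ + _)
        exacts [integral_abs_F_sub_le_W1 hP hQup, integral_abs_F_sub_le_W1 hP hQdown]

theorem stmt8 (P Q Qup Qdown : Measure ℝ)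
    [IsProbabilityMeasure P] [IsProbabilityMeasure Q]
    [IsProbabilityMeasure Qup] [IsProbabilityMeasure Qdown]
    (n : ℕ) (hn : 0 < n)
    (p : ℝ → ℝ) (hp : ∀ t, 0 ≤ p t)
    (hPd : P = volume.withDensity fun t => ENNReal.ofReal (p t))
    (hpbdd : BddAbove (Set.range p))
    (hP : Integrable id P) (hQ : Integrable id Q)
    (hQup : Integrable id Qup) (hQdown : Integrable id Qdown)
    (hup : ∀ t : ℝ, F Qup t ≤ F Q t) (hdown : ∀ t : ℝ, F Q t ≤ F Qdown t) :
    totalCovGap P Q n ≤ (1/2) * (⨆ t, p t) *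
      (W1 P Qup + W1 P Qdown + ((∫ x, x ∂Qup) - ∫ x, x ∂Qdown)) :=
  stmt8_general P Q Qup Qdown n hn p hp hPd hpbdd hP hQup hQdown hup hdown
end
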